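/- Let L be the pre-Lie algebra A_a (a ∈ ℂ) or B_b on E = ⊕_{i∈ℤ} ℂe_i. If v ∈ L is such that the right multiplication R_v : x ↦ x∘v is a locally finite endomorphism of L (every vector lies in a finite-dimensional R_v-invariant subspace), then v is a scalar multiple of e_0. -/

import Mathlib

/-- The bilinear product on `E = ⊕_{i∈ℤ} ℂ e_i` determined on basis elements by
`e_i ∘ e_j = c i j • e_{i+j}`. -/
noncomputable def gradedProd (c : ℤ → ℤ → ℂ) (x y : ℤ →₀ ℂ) : ℤ →₀ ℂ :=
  x.sum fun i xi => y.sum fun j yj => Finsupp.single (i + j) (xi * yj * c i j)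

/-- The product of the pre-Lie algebra `A_a`: `e_i ∘ e_j = (1 + a i) e_{i+j}`. -/
noncomputable def mulA (a : ℂ) (x y : ℤ →₀ ℂ) : ℤ →₀ ℂ :=
  gradedProd (fun i _ => 1 + a * i) x y

/-- The product of the pre-Lie algebra `B_b`: `e_i ∘ e_j = (i/(1 + b j)) e_{i+j}`. -/
noncomputable def mulB (b : ℂ) (x y : ℤ →₀ ℂ) : ℤ →₀ ℂ :=
  gradedProd (fun i j => (i : ℂ) / (1 + b * j)) x y

/-!
Suppose `v` has a nonzero coefficient outside degree `0`. Then its support has an extreme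
degree `M ≠ 0` in some direction (its largest degree, or else its smallest). Right
multiplication by `v` pushes the extreme degree of any vector in that direction by exactly `M`,
the new extreme coefficient being the old one times `v M * c p M`. For both families the
structure constants `c p M` of `gradedProd c` vanish for only finitely many `p`, so starting
from a suitable `e_i` the orbit under `R_v` has nonzero coefficients in all the degrees
`i + n M`, and its span cannot be finite-dimensional.
-/

open Finsupp Set

lemma gradedProd_apply (c : ℤ → ℤ → ℂ) (x v : ℤ →₀ ℂ) (q : ℤ) :
    gradedProd c x v q = ∑ i ∈ x.support, x i * v (q - i) * c i (q - i) := by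
  simp only [gradedProd, Finsupp.sum, finsetSum_apply, single_apply]
  refine Finset.sum_congr rfl fun i _ => ?_
  simp_rw [show ∀ j, (i + j = q) ↔ (j = q - i) by omega]
  rw [Finset.sum_ite_eq']
  split_ifs with h
  · rfl
  · rw [notMem_support_iff.mp h]; ring

section ExtremeIndex

variable {R : Type*} [Zero R]

/-- `p` is the largest degree of `x` if `s > 0`, the smallest if `s < 0`. -/
def IsExtremeIndex (s p : ℤ) (x : ℤ →₀ R) : Prop :=
  x p ≠ 0 ∧ ∀ q, 0 < s * (q - p) → x q = 0

lemma isExtremeIndex_single (s i : ℤ) {r : R} (hr : r ≠ 0) :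
    IsExtremeIndex s i (single i r) := by
  refine ⟨by simpa using hr, fun q hq => single_eq_of_ne ?_⟩
  rintro rfl
  simp at hq

lemma exists_isExtremeIndex_of_apply_ne_zero {v : ℤ →₀ R} {m : ℤ} (hm : m ≠ 0)
    (hvm : v m ≠ 0) : ∃ s M : ℤ, s ≠ 0 ∧ M ≠ 0 ∧ IsExtremeIndex s M v := by
  have hmem : m ∈ v.support := mem_support_iff.mpr hvm
  have hne : v.support.Nonempty := ⟨m, hmem⟩
  have hle : ∀ j, v j ≠ 0 → j ≤ v.support.max' hne :=
    fun j hj => v.support.le_max' j (mem_support_iff.mpr hj)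
  have hge : ∀ j, v j ≠ 0 → v.support.min' hne ≤ j :=
    fun j hj => v.support.min'_le j (mem_support_iff.mpr hj)
  by_cases hmax : v.support.max' hne = 0
  · refine ⟨-1, v.support.min' hne, by norm_num, ?_, ?_, fun j hj => ?_⟩
    · have := hle m hvm; have := hge m hvm; omega
    · exact mem_support_iff.mp (v.support.min'_mem hne)
    · by_contra hvj; have := hge j hvj; omega
  · refine ⟨1, v.support.max' hne, one_ne_zero, hmax, ?_, fun j hj => ?_⟩
    · exact mem_support_iff.mp (v.support.max'_mem hne)
    · by_contra hvj; have := hle j hvj; omega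

end ExtremeIndex

section RightMultiplication

variable {c : ℤ → ℤ → ℂ} {x v : ℤ →₀ ℂ} {s p M : ℤ}

lemma gradedProd_apply_add (hs : s ≠ 0) (hx : ∀ q, 0 < s * (q - p) → x q = 0)
    (hv : ∀ j, 0 < s * (j - M) → v j = 0) :
    gradedProd c x v (p + M) = x p * v M * c p M := by
  rw [gradedProd_apply, Finset.sum_eq_single p]
  · rw [add_sub_cancel_left]
  · intro i _ hip
    rcases lt_trichotomy (s * (i - p)) 0 with h | h | h
    · rw [hv _ (by linarith), mul_zero, zero_mul]
    · exact absurd (sub_eq_zero.mp ((mul_eq_zero.mp h).resolve_left hs)) hip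
    · rw [hx i h, zero_mul, zero_mul]
  · intro hp
    rw [notMem_support_iff.mp hp, zero_mul, zero_mul]

lemma isExtremeIndex_gradedProd (hs : s ≠ 0) (hx : IsExtremeIndex s p x)
    (hv : IsExtremeIndex s M v) (hc : c p M ≠ 0) :
    IsExtremeIndex s (p + M) (gradedProd c x v) := by
  refine ⟨?_, fun q hq => ?_⟩
  · rw [gradedProd_apply_add hs hx.2 hv.2]
    exact mul_ne_zero (mul_ne_zero hx.1 hv.1) hc
  · rw [gradedProd_apply]
    refine Finset.sum_eq_zero fun i _ => ?_
    rcases le_or_gt (s * (i - p)) 0 with h | h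
    · rw [hv.2 _ (by linarith), mul_zero, zero_mul]
    · rw [hx.2 i h, zero_mul, zero_mul]

lemma isExtremeIndex_iterate_gradedProd (hs : s ≠ 0) (hx : IsExtremeIndex s p x)
    (hv : IsExtremeIndex s M v) (hc : ∀ k : ℕ, c (p + k * M) M ≠ 0) (n : ℕ) :
    IsExtremeIndex s (p + n * M) ((fun w => gradedProd c w v)^[n] x) := by
  induction n with
  | zero => simpa using hx
  | succ n ih =>
    rw [Function.iterate_succ_apply', Nat.cast_succ, add_one_mul, ← add_assoc]
    exact isExtremeIndex_gradedProd hs ih hv (hc n)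

end RightMultiplication

lemma exists_forall_add_mul_notMem {Z : Set ℤ} (hZ : Z.Finite) {M : ℤ} (hM : M ≠ 0) :
    ∃ i : ℤ, ∀ k : ℕ, i + k * M ∉ Z := by
  obtain ⟨B, hB⟩ := (hZ.image abs).bddAbove
  refine ⟨M * (|B| + 1), fun k hk => ?_⟩
  have hbound : |M * (|B| + 1) + k * M| ≤ B := hB ⟨_, hk, rfl⟩
  have habs : |M * (|B| + 1) + k * M| = |M| * (|B| + 1 + k) := by
    rw [show M * (|B| + 1) + k * M = M * (|B| + 1 + k) by ring, abs_mul,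
      abs_of_pos (by positivity : (0 : ℤ) < |B| + 1 + k)]
  have hpos : (0 : ℤ) ≤ |B| + 1 + k := by positivity
  nlinarith [mul_le_mul_of_nonneg_right (Int.one_le_abs hM) hpos, le_abs_self B]

lemma exists_finset_forall_support_subset {α R : Type*} [DecidableEq α] [Semiring R]
    {S : Submodule R (α →₀ R)} (hS : S.FG) : ∃ F : Finset α, ∀ x ∈ S, x.support ⊆ F := by
  obtain ⟨T, rfl⟩ := hS
  refine ⟨T.sup Finsupp.support, fun x hx => (mem_supported R x).mp ?_⟩
  refine Submodule.span_le.mpr (fun y hy => ?_) hx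
  exact (mem_supported R y).mpr (Finset.coe_subset.mpr (Finset.le_sup (f := Finsupp.support) hy))

theorem eq_single_zero_of_locallyFinite_gradedProd (c : ℤ → ℤ → ℂ)
    (hc : ∀ M ≠ 0, {i | c i M = 0}.Finite) (v : ℤ →₀ ℂ)
    (hlf : ∀ x : ℤ →₀ ℂ, FiniteDimensional ℂ
      (Submodule.span ℂ (range fun n : ℕ => (fun w => gradedProd c w v)^[n] x))) :
    ∃ r : ℂ, v = single 0 r := by
  refine support_subset_singleton'.mp fun m hm => Finset.mem_singleton.mpr ?_
  by_contra hm0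
  obtain ⟨s, M, hs, hM, hv⟩ := exists_isExtremeIndex_of_apply_ne_zero hm0 (mem_support_iff.mp hm)
  obtain ⟨i, hi⟩ := exists_forall_add_mul_notMem (hc M hM) hM
  have horbit := isExtremeIndex_iterate_gradedProd hs (isExtremeIndex_single s i one_ne_zero) hv
    (fun k => by simpa using hi k)
  obtain ⟨F, hF⟩ := exists_finset_forall_support_subset
    ((Submodule.fg_iff_finiteDimensional _).mpr (hlf (single i 1)))
  have hmemF : ∀ n : ℕ, i + n * M ∈ F := fun n =>
    hF _ (Submodule.subset_span ⟨n, rfl⟩) (mem_support_iff.mpr (horbit n).1)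
  have hinj : Function.Injective fun n : ℕ => i + n * M := fun n m h => by simpa [hM] using h
  exact infinite_range_of_injective hinj
    (F.finite_toSet.subset (range_subset_iff.mpr hmemF))

lemma setOf_one_add_mul_eq_zero_subsingleton (a : ℂ) :
    {i : ℤ | 1 + a * i = 0}.Subsingleton := by
  intro i (hi : 1 + a * i = 0) j (hj : 1 + a * j = 0)
  have ha : a ≠ 0 := by rintro rfl; simp at hi
  have : a * ((i : ℂ) - j) = 0 := by linear_combination hi - hj
  exact_mod_cast sub_eq_zero.mp ((mul_eq_zero.mp this).resolve_left ha)

lemma one_add_mul_intCast_ne_zero {b : ℂ} (hb : ∀ n : ℤ, n ≠ 0 → b ≠ (n : ℂ)⁻¹) {M : ℤ}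
    (hM : M ≠ 0) : 1 + b * M ≠ 0 := by
  intro h
  refine hb (-M) (neg_ne_zero.mpr hM) (eq_inv_of_mul_eq_one_right ?_)
  push_cast
  linear_combination -h

/-- If `L` is one of the `A_a` or `B_b` and the right multiplication `R_v` by `v`
is locally finite, then `v` is proportional to `e_0`. -/
theorem locally_finite_right_mul (mul : (ℤ →₀ ℂ) → (ℤ →₀ ℂ) → (ℤ →₀ ℂ))
    (hL : (∃ a : ℂ, mul = mulA a) ∨
      (∃ b : ℂ, (∀ n : ℤ, n ≠ 0 → b ≠ (n : ℂ)⁻¹) ∧ mul = mulB b))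
    (v : ℤ →₀ ℂ)
    (hlf : ∀ x : ℤ →₀ ℂ, FiniteDimensional ℂ
      (Submodule.span ℂ (Set.range fun n : ℕ => (fun w => mul w v)^[n] x))) :
    ∃ c : ℂ, v = Finsupp.single 0 c := by
  obtain ⟨c, rfl, hc⟩ : ∃ c : ℤ → ℤ → ℂ, mul = gradedProd c ∧
      ∀ M ≠ 0, {i | c i M = 0}.Finite := by
    rcases hL with ⟨a, rfl⟩ | ⟨b, hb, rfl⟩
    · exact ⟨_, rfl, fun _ _ => (setOf_one_add_mul_eq_zero_subsingleton a).finite⟩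
    · refine ⟨_, rfl, fun M hM => (finite_singleton 0).subset fun i hi => ?_⟩
      exact_mod_cast (div_eq_zero_iff.mp hi).resolve_right (one_add_mul_intCast_ne_zero hb hM)
  exact eq_single_zero_of_locallyFinite_gradedProd c hc v hlf
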